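/- arXiv:0710.5758 — 2 statements merged into one kernel-verified Lean document; each statement's English description precedes it below -/
import Mathlib

section
/- Let m, n, l ≥ 1, let H₁ ∈ ℂ^{n×m} and H₂ ∈ ℂ^{l×n}, and let P₁, P₂ > 0. Suppose b₁ ∈ ℂ^m is a unit vector with P₁‖H₁b₁‖² = sup{ P₁‖H₁s‖² : ‖s‖ = 1 } =: γ₁⋆ > 0, and g₁ ∈ ℂ^n is a unit vector with P₂‖H₂g₁‖² = sup{ P₂‖H₂w‖² : ‖w‖ = 1 } =: γ₂⋆ > 0. Set a₁ = H₁b₁/‖H₁b₁‖, f₁ = H₂g₁/‖H₂g₁‖, σ = (1 + P₁‖H₁b₁‖²)^{-1/2}, and W⋆ = σ·g₁a₁ᴴ (a rank-one matrix). Then the triple (s, r, W) = (b₁, f₁, W⋆) satisfies ‖b₁‖ = ‖f₁‖ = 1 and P₁‖W⋆H₁b₁‖² + ‖W⋆‖_F² = 1, and the objective P₁P₂|f₁ᴴH₂W⋆H₁b₁|² / (P₂‖W⋆ᴴH₂ᴴf₁‖² + 1) equals γ₁⋆γ₂⋆ / (1 + γ₁⋆ + γ₂⋆). -/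
/-!
The matched relay `W⋆ = σ g₁ a₁ᴴ` maps the received signal `H₁b₁ = ‖H₁b₁‖ a₁` onto
`σ‖H₁b₁‖ g₁`, and its adjoint maps `H₂ᴴf₁` onto `σ‖H₂g₁‖ a₁`; since `‖W⋆‖_F = σ`, every
quantity in the constraint and the objective is a monomial in `σ`, `‖H₁b₁‖`, `‖H₂g₁‖`.
With `σ²(1 + γ₁⋆) = 1` the objective becomes `γ₁⋆γ₂⋆σ² / (γ₂⋆σ² + 1)`, which is the claimed value.
-/

/-- Euclidean norm of a complex vector. -/
noncomputable def cnorm {k : ℕ} (v : Fin k → ℂ) : ℝ :=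
  Real.sqrt (∑ i, ‖v i‖ ^ 2)

/-- Squared Frobenius norm of a complex matrix. -/
noncomputable def frobSq {p q : ℕ} (A : Matrix (Fin p) (Fin q) ℂ) : ℝ :=
  ∑ i, ∑ j, ‖A i j‖ ^ 2

open Matrix

section cnorm

variable {k : ℕ}

lemma cnorm_nonneg (v : Fin k → ℂ) : 0 ≤ cnorm v :=
  Real.sqrt_nonneg _

lemma cnorm_sq (v : Fin k → ℂ) : cnorm v ^ 2 = ∑ i, ‖v i‖ ^ 2 :=
  Real.sq_sqrt (by positivity)

lemma cnorm_smul (c : ℂ) (v : Fin k → ℂ) : cnorm (c • v) = ‖c‖ * cnorm v := by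
  simp only [cnorm, Pi.smul_apply, smul_eq_mul, norm_mul, mul_pow, ← Finset.mul_sum]
  rw [Real.sqrt_mul (by positivity), Real.sqrt_sq (norm_nonneg c)]

lemma cnorm_ofReal_smul (r : ℝ) (v : Fin k → ℂ) : cnorm ((r : ℂ) • v) = |r| * cnorm v := by
  rw [cnorm_smul, Complex.norm_real, Real.norm_eq_abs]

lemma cnorm_star (v : Fin k → ℂ) : cnorm (star v) = cnorm v := by
  simp [cnorm]

lemma star_dotProduct_self_eq_cnorm_sq (v : Fin k → ℂ) :
    star v ⬝ᵥ v = ((cnorm v ^ 2 : ℝ) : ℂ) := by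
  rw [cnorm_sq]
  push_cast
  exact Finset.sum_congr rfl fun i _ => Complex.conj_mul' (v i)

lemma cnorm_inv_smul_self {v : Fin k → ℂ} (hv : cnorm v ≠ 0) :
    cnorm ((cnorm v : ℂ)⁻¹ • v) = 1 := by
  rw [cnorm_smul, norm_inv, Complex.norm_real, Real.norm_eq_abs,
    abs_of_nonneg (cnorm_nonneg v), inv_mul_cancel₀ hv]

lemma star_inv_smul_self_dotProduct (v : Fin k → ℂ) :
    star ((cnorm v : ℂ)⁻¹ • v) ⬝ᵥ v = cnorm v := by
  rw [star_smul, smul_dotProduct, star_dotProduct_self_eq_cnorm_sq, star_inv₀,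
    Complex.star_def, Complex.conj_ofReal, smul_eq_mul]
  push_cast
  field_simp

lemma star_dotProduct_inv_smul_self (v : Fin k → ℂ) :
    star v ⬝ᵥ ((cnorm v : ℂ)⁻¹ • v) = cnorm v := by
  rw [star_dotProduct, star_inv_smul_self_dotProduct, Complex.star_def,
    Complex.conj_ofReal]

end cnorm

lemma frobSq_smul_vecMulVec {p q : ℕ} (c : ℂ) (g : Fin p → ℂ) (a : Fin q → ℂ) :
    frobSq (c • vecMulVec g a) = ‖c‖ ^ 2 * (cnorm g ^ 2 * cnorm a ^ 2) := by
  rw [cnorm_sq, cnorm_sq, Finset.sum_mul_sum, Finset.mul_sum]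
  simp only [frobSq, Matrix.smul_apply, vecMulVec_apply, smul_eq_mul, norm_mul, mul_pow,
    Finset.mul_sum]

lemma relay_snr_eq {γ₁ γ₂ s : ℝ} (hs : s * (1 + γ₁) = 1) :
    γ₁ * γ₂ * s / (γ₂ * s + 1) = γ₁ * γ₂ / (1 + γ₁ + γ₂) := by
  have hs0 : s ≠ 0 := left_ne_zero_of_mul_eq_one hs
  rw [show γ₂ * s + 1 = s * (1 + γ₁ + γ₂) by linear_combination -hs, mul_comm _ s,
    mul_div_mul_left _ _ hs0]

theorem stmt1_general (m n l : ℕ)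
    (H₁ : Matrix (Fin n) (Fin m) ℂ) (H₂ : Matrix (Fin l) (Fin n) ℂ)
    (P₁ P₂ : ℝ)
    (b₁ : Fin m → ℂ) (g₁ : Fin n → ℂ)
    (hb₁u : cnorm b₁ = 1) (hg₁u : cnorm g₁ = 1)
    (γ₁ γ₂ : ℝ)
    (hγ₁def : γ₁ = P₁ * cnorm (H₁.mulVec b₁) ^ 2)
    (hγ₂def : γ₂ = P₂ * cnorm (H₂.mulVec g₁) ^ 2)
    (hγ₁pos : 0 < γ₁) (hγ₂pos : 0 < γ₂)
    (a₁ : Fin n → ℂ) (f₁ : Fin l → ℂ) (σ : ℝ) (W : Matrix (Fin n) (Fin n) ℂ)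
    (ha₁ : a₁ = ((cnorm (H₁.mulVec b₁) : ℂ))⁻¹ • H₁.mulVec b₁)
    (hf₁ : f₁ = ((cnorm (H₂.mulVec g₁) : ℂ))⁻¹ • H₂.mulVec g₁)
    (hσ : σ = (Real.sqrt (1 + P₁ * cnorm (H₁.mulVec b₁) ^ 2))⁻¹)
    (hW : W = (σ : ℂ) • Matrix.vecMulVec g₁ (star a₁)) :
    cnorm b₁ = 1 ∧ cnorm f₁ = 1 ∧
    P₁ * cnorm (W.mulVec (H₁.mulVec b₁)) ^ 2 + frobSq W = 1 ∧
    P₁ * P₂ * ‖dotProduct (star f₁) (H₂.mulVec (W.mulVec (H₁.mulVec b₁)))‖ ^ 2 /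
        (P₂ * cnorm ((W.conjTranspose).mulVec ((H₂.conjTranspose).mulVec f₁)) ^ 2 + 1) =
      γ₁ * γ₂ / (1 + γ₁ + γ₂) := by
  set α := cnorm (H₁ *ᵥ b₁)
  set β := cnorm (H₂ *ᵥ g₁)
  have hα : α ≠ 0 := fun h => by simp [h] at hγ₁def; linarith
  have hβ : β ≠ 0 := fun h => by simp [h] at hγ₂def; linarith
  have hσsq : σ ^ 2 * (1 + γ₁) = 1 := by
    rw [hσ, inv_pow, Real.sq_sqrt (by linarith), ← hγ₁def, inv_mul_cancel₀ (by linarith)]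
  have hWH₁b₁ : W *ᵥ (H₁ *ᵥ b₁) = ((σ * α : ℝ) : ℂ) • g₁ := by
    rw [hW, smul_mulVec, vecMulVec_mulVec, op_smul_eq_smul, ha₁,
      star_inv_smul_self_dotProduct, smul_smul]
    push_cast; rfl
  have hWadj : Wᴴ *ᵥ (H₂ᴴ *ᵥ f₁) = ((σ * β : ℝ) : ℂ) • a₁ := by
    rw [hW, conjTranspose_smul, conjTranspose_vecMulVec, star_star, smul_mulVec,
      vecMulVec_mulVec, op_smul_eq_smul, dotProduct_mulVec, ← star_mulVec, hf₁,
      star_dotProduct_inv_smul_self, smul_smul, Complex.star_def, Complex.conj_ofReal]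
    push_cast; rfl
  have hfrob : frobSq W = σ ^ 2 := by
    rw [hW, frobSq_smul_vecMulVec, cnorm_star, ha₁, cnorm_inv_smul_self hα, hg₁u,
      Complex.norm_real, Real.norm_eq_abs, sq_abs]
    ring
  have hsignal : star f₁ ⬝ᵥ H₂ *ᵥ W *ᵥ H₁ *ᵥ b₁ = ((σ * α * β : ℝ) : ℂ) := by
    rw [hWH₁b₁, mulVec_smul, dotProduct_smul, hf₁, star_inv_smul_self_dotProduct, smul_eq_mul]
    push_cast; ring
  have hnoise : cnorm (Wᴴ *ᵥ H₂ᴴ *ᵥ f₁) = |σ * β| := by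
    rw [hWadj, cnorm_ofReal_smul, ha₁, cnorm_inv_smul_self hα, mul_one]
  refine ⟨hb₁u, hf₁ ▸ cnorm_inv_smul_self hβ, ?_, ?_⟩
  · rw [hWH₁b₁, cnorm_ofReal_smul, hg₁u, hfrob, mul_one, sq_abs]
    linear_combination hσsq - σ ^ 2 * hγ₁def
  · rw [hsignal, hnoise, Complex.norm_real, Real.norm_eq_abs, sq_abs, sq_abs,
      ← relay_snr_eq hσsq, hγ₁def, hγ₂def]
    ring

/-- If `b₁` and `g₁` are strongest right singular vectors (unit maximizers of the channel
gains) of `H₁` and `H₂`, then the matched beamforming triple `(b₁, f₁, W⋆)` with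
`W⋆ = σ g₁ a₁ᴴ`, `σ = (1 + P₁‖H₁b₁‖²)^{-1/2}`, satisfies the power constraints and
achieves the relay SNR `γ₁⋆γ₂⋆ / (1 + γ₁⋆ + γ₂⋆)`. -/
theorem stmt1 (m n l : ℕ) (hm : 1 ≤ m) (hn : 1 ≤ n) (hl : 1 ≤ l)
    (H₁ : Matrix (Fin n) (Fin m) ℂ) (H₂ : Matrix (Fin l) (Fin n) ℂ)
    (P₁ P₂ : ℝ) (hP₁ : 0 < P₁) (hP₂ : 0 < P₂)
    (b₁ : Fin m → ℂ) (g₁ : Fin n → ℂ)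
    (hb₁u : cnorm b₁ = 1) (hg₁u : cnorm g₁ = 1)
    (γ₁ γ₂ : ℝ)
    (hγ₁def : γ₁ = P₁ * cnorm (H₁.mulVec b₁) ^ 2)
    (hγ₂def : γ₂ = P₂ * cnorm (H₂.mulVec g₁) ^ 2)
    (hγ₁sup : γ₁ = sSup {x : ℝ | ∃ s : Fin m → ℂ,
        cnorm s = 1 ∧ x = P₁ * cnorm (H₁.mulVec s) ^ 2})
    (hγ₂sup : γ₂ = sSup {x : ℝ | ∃ w : Fin n → ℂ,
        cnorm w = 1 ∧ x = P₂ * cnorm (H₂.mulVec w) ^ 2})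
    (hγ₁pos : 0 < γ₁) (hγ₂pos : 0 < γ₂)
    (a₁ : Fin n → ℂ) (f₁ : Fin l → ℂ) (σ : ℝ) (W : Matrix (Fin n) (Fin n) ℂ)
    (ha₁ : a₁ = ((cnorm (H₁.mulVec b₁) : ℂ))⁻¹ • H₁.mulVec b₁)
    (hf₁ : f₁ = ((cnorm (H₂.mulVec g₁) : ℂ))⁻¹ • H₂.mulVec g₁)
    (hσ : σ = (Real.sqrt (1 + P₁ * cnorm (H₁.mulVec b₁) ^ 2))⁻¹)
    (hW : W = (σ : ℂ) • Matrix.vecMulVec g₁ (star a₁)) :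
    cnorm b₁ = 1 ∧ cnorm f₁ = 1 ∧
    P₁ * cnorm (W.mulVec (H₁.mulVec b₁)) ^ 2 + frobSq W = 1 ∧
    P₁ * P₂ * ‖dotProduct (star f₁) (H₂.mulVec (W.mulVec (H₁.mulVec b₁)))‖ ^ 2 /
        (P₂ * cnorm ((W.conjTranspose).mulVec ((H₂.conjTranspose).mulVec f₁)) ^ 2 + 1) =
      γ₁ * γ₂ / (1 + γ₁ + γ₂) :=
  stmt1_general m n l H₁ H₂ P₁ P₂ b₁ g₁ hb₁u hg₁u γ₁ γ₂ hγ₁def hγ₂def hγ₁pos hγ₂pos a₁ f₁ σ W ha₁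
    hf₁ hσ hW
end

section
/- Let m ≥ 1 and define, for unit vectors u, v ∈ ℂ^m, the chordal distance d(u, v) = √(1 − |uᴴv|²). Then for all unit vectors u, v, w ∈ ℂ^m: |d(u, v) − d(v, w)| ≤ d(u, w). -/
/-- Chordal distance between complex vectors: `d(u,v) = √(1 − |uᴴv|²)`. -/
noncomputable def cdist {k : ℕ} (u v : Fin k → ℂ) : ℝ :=
  Real.sqrt (1 - ‖dotProduct (star u) v‖ ^ 2)

open scoped InnerProductSpace

section Chordal

variable (𝕜 : Type*) {E : Type*} [RCLike 𝕜] [NormedAddCommGroup E] [InnerProductSpace 𝕜 E]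

noncomputable def chordalDist (x y : E) : ℝ :=
  √(1 - ‖⟪x, y⟫_𝕜‖ ^ 2)

variable {𝕜}

theorem chordalDist_comm (x y : E) : chordalDist 𝕜 x y = chordalDist 𝕜 y x := by
  rw [chordalDist, chordalDist, norm_inner_symm]

theorem norm_sub_inner_smul_eq_chordalDist {x y : E} (hx : ‖x‖ = 1) (hy : ‖y‖ = 1) :
    ‖x - ⟪y, x⟫_𝕜 • y‖ = chordalDist 𝕜 x y := by
  have hsq : ‖x - ⟪y, x⟫_𝕜 • y‖ ^ 2 = 1 - ‖⟪x, y⟫_𝕜‖ ^ 2 := by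
    rw [@norm_sub_sq 𝕜, inner_smul_right, ← inner_conj_symm x y, RCLike.mul_conj, norm_smul,
      RCLike.norm_conj, hx, hy]
    norm_cast
    ring
  rw [chordalDist, ← hsq, Real.sqrt_sq (norm_nonneg _)]

theorem norm_sub_inner_smul_le {y : E} (hy : ‖y‖ = 1) (x : E) (c : 𝕜) :
    ‖x - ⟪y, x⟫_𝕜 • y‖ ≤ ‖x - c • y‖ := by
  rw [← Submodule.starProjection_unit_singleton 𝕜 hy, Submodule.starProjection_minimal]
  refine ciInf_le ⟨(0 : ℝ), ?_⟩ (⟨c • y, ?_⟩ : 𝕜 ∙ y)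
  · rintro _ ⟨z, rfl⟩
    exact norm_nonneg _
  · exact Submodule.smul_mem _ c (Submodule.mem_span_singleton_self y)

theorem chordalDist_le_norm_sub_smul {x y : E} (hx : ‖x‖ = 1) (hy : ‖y‖ = 1) (c : 𝕜) :
    chordalDist 𝕜 x y ≤ ‖x - c • y‖ :=
  norm_sub_inner_smul_eq_chordalDist (𝕜 := 𝕜) hx hy ▸ norm_sub_inner_smul_le hy x c

theorem chordalDist_triangle {u v w : E} (hu : ‖u‖ = 1) (hv : ‖v‖ = 1) (hw : ‖w‖ = 1) :
    chordalDist 𝕜 u w ≤ chordalDist 𝕜 u v + chordalDist 𝕜 v w := by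
  set a := ⟪v, u⟫_𝕜
  set b := ⟪w, v⟫_𝕜
  have ha : ‖a‖ ≤ 1 := by simpa [hu, hv] using norm_inner_le_norm (𝕜 := 𝕜) v u
  calc chordalDist 𝕜 u w ≤ ‖u - (a * b) • w‖ := chordalDist_le_norm_sub_smul hu hw _
    _ ≤ ‖u - a • v‖ + ‖a • v - (a * b) • w‖ := norm_sub_le_norm_sub_add_norm_sub _ _ _
    _ = chordalDist 𝕜 u v + ‖a‖ * chordalDist 𝕜 v w := by
      rw [mul_smul, ← smul_sub, norm_smul, norm_sub_inner_smul_eq_chordalDist hu hv,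
        norm_sub_inner_smul_eq_chordalDist hv hw]
    _ ≤ chordalDist 𝕜 u v + chordalDist 𝕜 v w := by
      gcongr
      exact mul_le_of_le_one_left (Real.sqrt_nonneg _) ha

theorem abs_chordalDist_sub_chordalDist_le {u v w : E} (hu : ‖u‖ = 1) (hv : ‖v‖ = 1)
    (hw : ‖w‖ = 1) : |chordalDist 𝕜 u v - chordalDist 𝕜 v w| ≤ chordalDist 𝕜 u w := by
  rw [abs_sub_le_iff]
  constructor
  · linarith [chordalDist_triangle (𝕜 := 𝕜) hu hw hv, chordalDist_comm (𝕜 := 𝕜) v w]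
  · linarith [chordalDist_triangle (𝕜 := 𝕜) hv hu hw, chordalDist_comm (𝕜 := 𝕜) u v]

end Chordal

theorem cnorm_eq_norm_toLp {k : ℕ} (v : Fin k → ℂ) : cnorm v = ‖WithLp.toLp 2 v‖ := by
  rw [EuclideanSpace.norm_eq]; rfl

theorem cdist_eq_chordalDist {k : ℕ} (u v : Fin k → ℂ) :
    cdist u v = chordalDist ℂ (WithLp.toLp 2 u) (WithLp.toLp 2 v) := by
  rw [cdist, chordalDist, EuclideanSpace.inner_toLp_toLp, dotProduct_comm]

theorem stmt11_general (m : ℕ) (u v w : Fin m → ℂ)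
    (hu : cnorm u = 1) (hv : cnorm v = 1) (hw : cnorm w = 1) :
    |cdist u v - cdist v w| ≤ cdist u w := by
  rw [cnorm_eq_norm_toLp] at hu hv hw
  simpa only [cdist_eq_chordalDist] using abs_chordalDist_sub_chordalDist_le hu hv hw

/-- Triangle-type inequality for the chordal distance between unit vectors:
`|d(u,v) − d(v,w)| ≤ d(u,w)`. -/
theorem stmt11 (m : ℕ) (hm : 1 ≤ m) (u v w : Fin m → ℂ)
    (hu : cnorm u = 1) (hv : cnorm v = 1) (hw : cnorm w = 1) :
    |cdist u v - cdist v w| ≤ cdist u w :=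
  stmt11_general m u v w hu hv hw
end
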